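/- Let c : ℝ^n → ℝ^{ñ} be differentiable at x⁺ and d : ℝ^n×ℝ^m → ℝ^{m̃} be differentiable in x at (x⁺,y⁺). Fix ρ > 0, Λ > 0, θ_a > 0, δ_c > 0, L_F > 0, L_d > 0, ε ≥ 0, λx ∈ ℝ^{ñ} with λx ≥ 0 and ‖λx‖ ≤ Λ ≤ ρ·θ_a, and λy ∈ ℝ^{m̃} with λy ≥ 0, and set λ̃ = [λx + ρ c(x⁺)]_+. Suppose: (a) there exists v ∈ ℝ^n with ‖v‖ = 1 and ⟨v, ∇c_i(x⁺)⟩ ≤ −δ_c for every index i with c_i(x⁺) ≥ −θ_a; (b) there exists s ∈ ℝ^n with ‖s‖ ≤ L_F and ‖s + Σ_i λ̃_i ∇c_i(x⁺) − Σ_j (λy)_j ∇_x d_j(x⁺,y⁺)‖ ≤ ε; (c) ‖Σ_j (λy)_j ∇_x d_j(x⁺,y⁺)‖ ≤ L_d ‖λy‖. Then δ_c·‖λ̃‖₁ ≤ L_F + L_d‖λy‖ + ε, and consequently ‖[c(x⁺)]_+‖ ≤ ρ^{-1}‖λ̃‖ ≤ ρ^{-1}δ_c^{-1}(L_F + L_d‖λy‖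 + ε). -/

import Mathlib

/-!
Along the MFCQ direction `v`, every index carrying outer multiplier mass is active: if
`λ̃ᵢ > 0` then `ρ cᵢ(x⁺) > -λxᵢ ≥ -‖λx‖ ≥ -ρ θ_a`. Hence `⟨v, ∑ λ̃ᵢ ∇cᵢ⟩ ≤ -δ_c ‖λ̃‖₁`, while
approximate stationarity bounds `‖∑ λ̃ᵢ ∇cᵢ‖` by `L_F + L_d ‖λy‖ + ε`. The bound on `[c(x⁺)]₊`
follows from `ρ [c]₊ ≤ [λx + ρ c]₊` componentwise and `‖·‖ ≤ ‖·‖₁`.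
-/

open Finset

/-- Componentwise positive part `[v]₊` of a vector. -/
noncomputable def posPart {k : ℕ} (v : EuclideanSpace ℝ (Fin k)) : EuclideanSpace ℝ (Fin k) :=
  WithLp.toLp 2 (fun i => max (v i) 0)

namespace PiLp

variable {ι : Type*} [Fintype ι] {β : ι → Type*} [∀ i, SeminormedAddCommGroup (β i)]

theorem norm_le_sum_norm (p : ENNReal) [Fact (1 ≤ p)] (x : PiLp p β) : ‖x‖ ≤ ∑ i, ‖x i‖ := by
  classical
  calc ‖x‖ = ‖∑ i, PiLp.single p i (x i)‖ := by congr 1; ext j; simp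
    _ ≤ ∑ i, ‖PiLp.single p i (x i)‖ := norm_sum_le _ _
    _ = ∑ i, ‖x i‖ := by simp only [PiLp.norm_single]

theorem norm_le_norm_of_forall_norm_le {x y : PiLp 2 β} (h : ∀ i, ‖x i‖ ≤ ‖y i‖) :
    ‖x‖ ≤ ‖y‖ := by
  refine (pow_le_pow_iff_left₀ (norm_nonneg _) (norm_nonneg _) two_ne_zero).1 ?_
  rw [PiLp.norm_sq_eq_of_L2, PiLp.norm_sq_eq_of_L2]
  exact sum_le_sum fun i _ => pow_le_pow_left₀ (norm_nonneg _) (h i) 2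

end PiLp

section PosPart

variable {k : ℕ}

@[simp]
theorem posPart_apply (v : EuclideanSpace ℝ (Fin k)) (i : Fin k) : posPart v i = max (v i) 0 :=
  rfl

theorem posPart_apply_nonneg (v : EuclideanSpace ℝ (Fin k)) (i : Fin k) : 0 ≤ posPart v i :=
  le_max_right _ _

theorem posPart_smul {r : ℝ} (hr : 0 ≤ r) (v : EuclideanSpace ℝ (Fin k)) :
    posPart (r • v) = r • posPart v := by
  ext i
  simp [mul_max_of_nonneg _ _ hr]

theorem norm_posPart_le_of_le {v w : EuclideanSpace ℝ (Fin k)} (h : ∀ i, v i ≤ w i) :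
    ‖posPart v‖ ≤ ‖posPart w‖ :=
  PiLp.norm_le_norm_of_forall_norm_le fun i => by
    rw [Real.norm_of_nonneg (posPart_apply_nonneg v i),
      Real.norm_of_nonneg (posPart_apply_nonneg w i)]
    exact max_le_max_right 0 (h i)

theorem neg_le_of_posPart_add_smul_pos {l w : EuclideanSpace ℝ (Fin k)} {ρ θ : ℝ} (hρ : 0 < ρ)
    (hl : ‖l‖ ≤ ρ * θ) {i : Fin k} (hi : 0 < posPart (l + ρ • w) i) : -θ ≤ w i := by
  have hli : l i ≤ ρ * θ :=
    (le_abs_self _).trans ((Real.norm_eq_abs _ ▸ PiLp.norm_apply_le l i).trans hl)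
  have hact : 0 < l i + ρ * w i := by simpa using hi
  nlinarith

end PosPart

theorem mul_sum_le_norm_sum_smul {ι E : Type*} [Fintype ι] [SeminormedAddCommGroup E]
    [InnerProductSpace ℝ E] {v : E} (hv : ‖v‖ ≤ 1) {μ : ι → ℝ} (hμ : ∀ i, 0 ≤ μ i) {g : ι → E}
    {δ : ℝ} (hg : ∀ i, 0 < μ i → inner ℝ v (g i) ≤ -δ) :
    δ * ∑ i, μ i ≤ ‖∑ i, μ i • g i‖ := by
  have hterm : ∀ i, δ * μ i ≤ -(μ i * inner ℝ v (g i)) := fun i => by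
    rcases (hμ i).eq_or_lt with h0 | hpos
    · simp [← h0]
    · nlinarith [hg i hpos]
  calc δ * ∑ i, μ i ≤ -inner ℝ v (∑ i, μ i • g i) := by
        simp only [mul_sum, inner_sum, real_inner_smul_right, ← sum_neg_distrib]
        exact sum_le_sum fun i _ => hterm i
    _ ≤ ‖v‖ * ‖∑ i, μ i • g i‖ := by
        exact (neg_le_abs _).trans (abs_real_inner_le_norm _ _)
    _ ≤ ‖∑ i, μ i • g i‖ := mul_le_of_le_one_left (norm_nonneg _) hv

theorem outer_multiplier_bound_general {n nt mt : ℕ}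
    (c : EuclideanSpace ℝ (Fin n) → EuclideanSpace ℝ (Fin nt))
    (gc : Fin nt → EuclideanSpace ℝ (Fin n))
    (xp : EuclideanSpace ℝ (Fin n))
    (gd : Fin mt → EuclideanSpace ℝ (Fin n))
    (ρ Λ θa δc LF Ld ε : ℝ)
    (hρ : 0 < ρ) (hδc : 0 < δc)
    (lx : EuclideanSpace ℝ (Fin nt)) (hlx : ∀ i, 0 ≤ lx i)
    (hlxΛ : ‖lx‖ ≤ Λ) (hΛθ : Λ ≤ ρ * θa)
    (ly : EuclideanSpace ℝ (Fin mt))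
    -- (a) generalized MFCQ direction at x⁺
    (v : EuclideanSpace ℝ (Fin n)) (hv : ‖v‖ = 1)
    (hmfcq : ∀ i, -θa ≤ c xp i → @inner ℝ _ _ v (gc i) ≤ -δc)
    -- (b) approximate stationarity
    (s : EuclideanSpace ℝ (Fin n)) (hsn : ‖s‖ ≤ LF)
    (hstat : ‖s + (∑ i, (posPart (lx + ρ • c xp) i) • gc i) - ∑ j, ly j • gd j‖ ≤ ε)
    -- (c) bound on the inner-constraint gradient combination
    (hdbnd : ‖∑ j, ly j • gd j‖ ≤ Ld * ‖ly‖) :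
    δc * (∑ i, |posPart (lx + ρ • c xp) i|) ≤ LF + Ld * ‖ly‖ + ε
    ∧ ‖posPart (c xp)‖ ≤ ρ⁻¹ * ‖posPart (lx + ρ • c xp)‖
    ∧ ρ⁻¹ * ‖posPart (lx + ρ • c xp)‖ ≤ ρ⁻¹ * δc⁻¹ * (LF + Ld * ‖ly‖ + ε) := by
  set lt := posPart (lx + ρ • c xp)
  set A := ∑ i, lt i • gc i
  set D := ∑ j, ly j • gd j
  have habs : ∑ i, |lt i| = ∑ i, lt i :=
    sum_congr rfl fun i _ => abs_of_nonneg (posPart_apply_nonneg _ i)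
  have hmfcq_sum : δc * ∑ i, lt i ≤ ‖A‖ :=
    mul_sum_le_norm_sum_smul hv.le (posPart_apply_nonneg _) fun i hi =>
      hmfcq i (neg_le_of_posPart_add_smul_pos hρ (hlxΛ.trans hΛθ) hi)
  have hA : ‖A‖ ≤ LF + Ld * ‖ly‖ + ε := calc
    ‖A‖ = ‖(s + A - D) - s + D‖ := by congr 1; abel
    _ ≤ ‖s + A - D‖ + ‖s‖ + ‖D‖ := norm_add_le_of_le (norm_sub_le _ _) le_rfl
    _ ≤ LF + Ld * ‖ly‖ + ε := by linarith
  have hℓ1 : δc * ∑ i, |lt i| ≤ LF + Ld * ‖ly‖ + ε := by rw [habs]; linarith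
  refine ⟨hℓ1, ?_, ?_⟩
  · rw [le_inv_mul_iff₀ hρ]
    calc ρ * ‖posPart (c xp)‖ = ‖posPart (ρ • c xp)‖ := by
          rw [posPart_smul hρ.le, norm_smul, Real.norm_of_nonneg hρ.le]
      _ ≤ ‖lt‖ := norm_posPart_le_of_le fun i => by simpa using hlx i
  · rw [mul_assoc]
    gcongr
    rw [le_inv_mul_iff₀ hδc]
    exact (mul_le_mul_of_nonneg_left (PiLp.norm_le_sum_norm 2 lt) hδc.le).trans
      (by simpa only [Real.norm_eq_abs] using hℓ1)

/-- Bound on the outer multiplier `λ̃ = [λx + ρ c(x⁺)]₊` and on the outer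
constraint violation `‖[c(x⁺)]₊‖` at an approximate stationary point of the augmented
Lagrangian subproblem, under the generalized MFCQ at `x⁺`. -/
theorem outer_multiplier_bound {n m nt mt : ℕ}
    (c : EuclideanSpace ℝ (Fin n) → EuclideanSpace ℝ (Fin nt))
    (gc : Fin nt → EuclideanSpace ℝ (Fin n))
    (xp : EuclideanSpace ℝ (Fin n))
    (hgc : ∀ i, HasGradientAt (fun x => c x i) (gc i) xp)
    (d : EuclideanSpace ℝ (Fin n) → EuclideanSpace ℝ (Fin m) → EuclideanSpace ℝ (Fin mt))
    (gd : Fin mt → EuclideanSpace ℝ (Fin n))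
    (yp : EuclideanSpace ℝ (Fin m))
    (hgd : ∀ j, HasGradientAt (fun x => d x yp j) (gd j) xp)
    (ρ Λ θa δc LF Ld ε : ℝ)
    (hρ : 0 < ρ) (hΛ : 0 < Λ) (hθa : 0 < θa) (hδc : 0 < δc)
    (hLF : 0 < LF) (hLd : 0 < Ld) (hε : 0 ≤ ε)
    (lx : EuclideanSpace ℝ (Fin nt)) (hlx : ∀ i, 0 ≤ lx i)
    (hlxΛ : ‖lx‖ ≤ Λ) (hΛθ : Λ ≤ ρ * θa)
    (ly : EuclideanSpace ℝ (Fin mt)) (hly : ∀ j, 0 ≤ ly j)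
    -- (a) generalized MFCQ direction at x⁺
    (v : EuclideanSpace ℝ (Fin n)) (hv : ‖v‖ = 1)
    (hmfcq : ∀ i, -θa ≤ c xp i → @inner ℝ _ _ v (gc i) ≤ -δc)
    -- (b) approximate stationarity
    (s : EuclideanSpace ℝ (Fin n)) (hsn : ‖s‖ ≤ LF)
    (hstat : ‖s + (∑ i, (posPart (lx + ρ • c xp) i) • gc i) - ∑ j, ly j • gd j‖ ≤ ε)
    -- (c) bound on the inner-constraint gradient combination
    (hdbnd : ‖∑ j, ly j • gd j‖ ≤ Ld * ‖ly‖) :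
    δc * (∑ i, |posPart (lx + ρ • c xp) i|) ≤ LF + Ld * ‖ly‖ + ε
    ∧ ‖posPart (c xp)‖ ≤ ρ⁻¹ * ‖posPart (lx + ρ • c xp)‖
    ∧ ρ⁻¹ * ‖posPart (lx + ρ • c xp)‖ ≤ ρ⁻¹ * δc⁻¹ * (LF + Ld * ‖ly‖ + ε) :=
  outer_multiplier_bound_general c gc xp gd ρ Λ θa δc LF Ld ε hρ hδc lx hlx hlxΛ hΛθ ly v hv hmfcq s
    hsn hstat hdbnd
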